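/- arXiv:1909.13663 — 8 statements merged into one kernel-verified Lean document; each statement's English description precedes it below -/
import Mathlib

section
/- Let f be the rank function of a polymatroid on ground set M and i ∈ M. Define (f↓i)(A) = f(A) if i ∉ A, and f(A) − (f(M) − f(M∖{i})) if i ∈ A. Then f↓i is again a polymatroid rank function (non-negative, monotone, submodular), and it is tight at i, i.e. (f↓i)(M) = (f↓i)(M∖{i}). -/
/-!
Submodularity makes the marginal value `f A - f (A \ {i})` of `i` antitone in `A`, so it is
smallest at `A = M`, where it is the private information of `i`. Hence subtracting that amount
from every set containing `i` keeps the marginal value of `i` non-negative, which is what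
monotonicity needs; submodularity survives because `i` lies in as many of `A ∪ B`, `A ∩ B` as of
`A`, `B`, so the subtracted constants cancel. Non-negativity then follows from monotonicity.
-/

namespace Polymatroid

variable {α : Type*} [DecidableEq α]

def privateInfo (f : Finset α → ℝ) (M : Finset α) (i : α) : ℝ :=
  f M - f (M \ {i})

def tighten (f : Finset α → ℝ) (M : Finset α) (i : α) (A : Finset α) : ℝ :=
  if i ∈ A then f A - privateInfo f M i else f A

variable {f : Finset α → ℝ} {M : Finset α} {i : α}

theorem privateInfo_le_of_mem
    (hsub : ∀ A B : Finset α, A ⊆ M → B ⊆ M → f (A ∪ B) + f (A ∩ B) ≤ f A + f B)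
    {A : Finset α} (hA : A ⊆ M) (hiA : i ∈ A) :
    privateInfo f M i ≤ privateInfo f A i := by
  have hunion : A ∪ (M \ {i}) = M := by grind
  have hinter : A ∩ (M \ {i}) = A \ {i} := by grind
  have h := hsub A (M \ {i}) hA Finset.sdiff_subset
  rw [hunion, hinter] at h
  unfold privateInfo
  linarith

theorem tighten_empty (hempty : f ∅ = 0) : tighten f M i ∅ = 0 := by
  simp [tighten, hempty]

theorem tighten_mono
    (hmono : ∀ A B : Finset α, A ⊆ B → B ⊆ M → f A ≤ f B)
    (hsub : ∀ A B : Finset α, A ⊆ M → B ⊆ M → f (A ∪ B) + f (A ∩ B) ≤ f A + f B)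
    {A B : Finset α} (hAB : A ⊆ B) (hB : B ⊆ M) :
    tighten f M i A ≤ tighten f M i B := by
  unfold tighten
  split_ifs with hiA hiB hiB
  · linarith [hmono A B hAB hB]
  · exact absurd (hAB hiA) hiB
  · have hA : A ⊆ B \ {i} :=
      Finset.subset_sdiff.mpr ⟨hAB, Finset.disjoint_singleton_right.mpr hiA⟩
    have hfA := hmono A (B \ {i}) hA (Finset.sdiff_subset.trans hB)
    have hinfo := privateInfo_le_of_mem hsub hB hiB
    unfold privateInfo at hinfo ⊢
    linarith
  · exact hmono A B hAB hB

theorem tighten_nonneg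
    (hempty : f ∅ = 0) (hmono : ∀ A B : Finset α, A ⊆ B → B ⊆ M → f A ≤ f B)
    (hsub : ∀ A B : Finset α, A ⊆ M → B ⊆ M → f (A ∪ B) + f (A ∩ B) ≤ f A + f B)
    {A : Finset α} (hA : A ⊆ M) : 0 ≤ tighten f M i A :=
  tighten_empty (M := M) (i := i) hempty ▸ tighten_mono hmono hsub A.empty_subset hA

theorem tighten_submodular
    (hsub : ∀ A B : Finset α, A ⊆ M → B ⊆ M → f (A ∪ B) + f (A ∩ B) ≤ f A + f B)
    {A B : Finset α} (hA : A ⊆ M) (hB : B ⊆ M) :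
    tighten f M i (A ∪ B) + tighten f M i (A ∩ B) ≤ tighten f M i A + tighten f M i B := by
  have hf := hsub A B hA hB
  unfold tighten
  by_cases hiA : i ∈ A <;> by_cases hiB : i ∈ B <;>
    simp only [Finset.mem_union, Finset.mem_inter, hiA, hiB, or_self, or_true, or_false,
      and_self, and_true, and_false, ↓reduceIte] <;> linarith

theorem tighten_self : tighten f M i M = tighten f M i (M \ {i}) := by
  by_cases hi : i ∈ M
  · simp [tighten, privateInfo, hi]
  · rw [Finset.sdiff_singleton_eq_erase, Finset.erase_eq_self.mpr hi]

end Polymatroid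

theorem tightening_is_polymatroid_general {α : Type*} [DecidableEq α] (M : Finset α) (f : Finset α → ℝ)
    (hempty : f ∅ = 0)
    (hmono : ∀ A B : Finset α, A ⊆ B → B ⊆ M → f A ≤ f B)
    (hsub : ∀ A B : Finset α, A ⊆ M → B ⊆ M → f (A ∪ B) + f (A ∩ B) ≤ f A + f B)
    (i : α)
    (g : Finset α → ℝ)
    (hg : ∀ A : Finset α, g A = if i ∈ A then f A - (f M - f (M \ {i})) else f A) :
    g ∅ = 0 ∧
    (∀ A, A ⊆ M → 0 ≤ g A) ∧
    (∀ A B : Finset α, A ⊆ B → B ⊆ M → g A ≤ g B) ∧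
    (∀ A B : Finset α, A ⊆ M → B ⊆ M → g (A ∪ B) + g (A ∩ B) ≤ g A + g B) ∧
    g M = g (M \ {i}) := by
  obtain rfl : g = Polymatroid.tighten f M i := funext hg
  exact ⟨Polymatroid.tighten_empty hempty,
    fun _ hA => Polymatroid.tighten_nonneg hempty hmono hsub hA,
    fun _ _ hAB hB => Polymatroid.tighten_mono hmono hsub hAB hB,
    fun _ _ hA hB => Polymatroid.tighten_submodular hsub hA hB,
    Polymatroid.tighten_self⟩

/-- Tightening a polymatroid at an element `i` yields a polymatroid tight at `i`. -/
theorem tightening_is_polymatroid {α : Type*} [DecidableEq α] (M : Finset α) (f : Finset α → ℝ)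
    (hempty : f ∅ = 0)
    (hnonneg : ∀ A, A ⊆ M → 0 ≤ f A)
    (hmono : ∀ A B : Finset α, A ⊆ B → B ⊆ M → f A ≤ f B)
    (hsub : ∀ A B : Finset α, A ⊆ M → B ⊆ M → f (A ∪ B) + f (A ∩ B) ≤ f A + f B)
    (i : α) (hi : i ∈ M)
    (g : Finset α → ℝ)
    (hg : ∀ A : Finset α, g A = if i ∈ A then f A - (f M - f (M \ {i})) else f A) :
    g ∅ = 0 ∧
    (∀ A, A ⊆ M → 0 ≤ g A) ∧
    (∀ A B : Finset α, A ⊆ B → B ⊆ M → g A ≤ g B) ∧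
    (∀ A B : Finset α, A ⊆ M → B ⊆ M → g (A ∪ B) + g (A ∩ B) ≤ g A + g B) ∧
    g M = g (M \ {i}) :=
  tightening_is_polymatroid_general M f hempty hmono hsub i g hg
end

section
/- If the polymatroid f on ground set M is tight (f(M∖{i}) = f(M) for all i ∈ M), then the double dual equals f: (f⊥)⊥ = f; moreover f⊥({i}) = f({i}) for every singleton i. -/
/-!
Unfolding the dual twice, everything cancels except `f A - f ∅` and, for each `j ∈ A`, the defect
`f (M \ {j}) - f M` by which `f⊥ {j}` differs from `f {j}`. Tightness makes every defect vanish.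
-/

namespace Finset

variable {α : Type*} [DecidableEq α]

def polymatroidDual (M : Finset α) (f : Finset α → ℝ) (A : Finset α) : ℝ :=
  f (M \ A) + ∑ j ∈ A, f {j} - f M

variable (M : Finset α) (f : Finset α → ℝ)

theorem polymatroidDual_singleton (i : α) :
    polymatroidDual M f {i} = f {i} + (f (M \ {i}) - f M) := by
  rw [polymatroidDual, sum_singleton]
  ring

theorem polymatroidDual_polymatroidDual {A : Finset α} (hA : A ⊆ M) :
    polymatroidDual M (polymatroidDual M f) A = f A - f ∅ + ∑ j ∈ A, (f (M \ {j}) - f M) := by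
  have hcompl : polymatroidDual M f (M \ A) = f A + ∑ j ∈ M \ A, f {j} - f M := by
    rw [polymatroidDual, sdiff_sdiff_eq_self hA]
  have hfull : polymatroidDual M f M = f ∅ + ∑ j ∈ M, f {j} - f M := by
    rw [polymatroidDual, sdiff_self, bot_eq_empty]
  rw [polymatroidDual, hcompl, hfull, ← sum_sdiff hA]
  simp only [polymatroidDual_singleton, sum_add_distrib]
  ring

end Finset

open Finset in
theorem tight_double_dual_general {α : Type*} [DecidableEq α] (M : Finset α) (f : Finset α → ℝ)
    (hempty : f ∅ = 0)
    (htight : ∀ i ∈ M, f (M \ {i}) = f M)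
    (fd fdd : Finset α → ℝ)
    (hfd : ∀ A : Finset α, fd A = f (M \ A) + (∑ j ∈ A, f {j}) - f M)
    (hfdd : ∀ A : Finset α, fdd A = fd (M \ A) + (∑ j ∈ A, fd {j}) - fd M) :
    (∀ A, A ⊆ M → fdd A = f A) ∧ (∀ i ∈ M, fd {i} = f {i}) := by
  have hfd_eq : fd = polymatroidDual M f := funext hfd
  have hfdd_eq : fdd = polymatroidDual M fd := funext hfdd
  subst hfd_eq hfdd_eq
  refine ⟨fun A hA => ?_, fun i hi => ?_⟩
  · rw [polymatroidDual_polymatroidDual M f hA, hempty,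
      sum_eq_zero fun j hj => sub_eq_zero.2 (htight j (hA hj))]
    ring
  · rw [polymatroidDual_singleton, htight i hi, sub_self, add_zero]

/-- For a tight polymatroid the double dual equals the polymatroid itself, and the
dual has the same value on singletons. -/
theorem tight_double_dual {α : Type*} [DecidableEq α] (M : Finset α) (f : Finset α → ℝ)
    (hempty : f ∅ = 0)
    (hnonneg : ∀ A, A ⊆ M → 0 ≤ f A)
    (hmono : ∀ A B : Finset α, A ⊆ B → B ⊆ M → f A ≤ f B)
    (hsub : ∀ A B : Finset α, A ⊆ M → B ⊆ M → f (A ∪ B) + f (A ∩ B) ≤ f A + f B)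
    (htight : ∀ i ∈ M, f (M \ {i}) = f M)
    (fd fdd : Finset α → ℝ)
    (hfd : ∀ A : Finset α, fd A = f (M \ A) + (∑ j ∈ A, f {j}) - f M)
    (hfdd : ∀ A : Finset α, fdd A = fd (M \ A) + (∑ j ∈ A, fd {j}) - fd M) :
    (∀ A, A ⊆ M → fdd A = f A) ∧ (∀ i ∈ M, fd {i} = f {i}) :=
  tight_double_dual_general M f hempty htight fd fdd hfd hfdd
end

section
/- For any polymatroid f on ground set M, the double dual (f⊥)⊥ equals the full tightening f↓ of f, obtained by stripping the private info f(M)−f(M∖{i}) of every element i from each set containing it; in particular (f⊥)(⊥)(⊥) = f⊥. -/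
/-!
Both identities are bookkeeping with sums over `A` and `M \ A`. The dual is blind to modular
perturbations: subtracting `A ↦ ∑ i ∈ A, w i` from `f` does not change `f⊥` on subsets of `M`.
Dualising twice returns `f` minus the modular function of the private informations
`f M - f (M \ {i})`, which is `f↓`; dualising `f↓` therefore gives `f⊥` back.
-/

open Finset

namespace SetFunction

variable {α : Type*} [DecidableEq α]

def dual (M : Finset α) (f : Finset α → ℝ) (A : Finset α) : ℝ :=
  f (M \ A) + ∑ j ∈ A, f {j} - f M

def tightening (M : Finset α) (f : Finset α → ℝ) (A : Finset α) : ℝ :=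
  f A - ∑ i ∈ A, (f M - f (M \ {i}))

variable {M A : Finset α}

theorem dual_sub_modular (f : Finset α → ℝ) (w : α → ℝ) (hA : A ⊆ M) :
    dual M (fun B => f B - ∑ i ∈ B, w i) A = dual M f A := by
  have hsplit : ∑ i ∈ M \ A, w i + ∑ i ∈ A, w i = ∑ i ∈ M, w i := sum_sdiff hA
  simp only [dual, sum_singleton, sum_sub_distrib]
  linarith

theorem dual_tightening (f : Finset α → ℝ) (hA : A ⊆ M) :
    dual M (tightening M f) A = dual M f A :=
  dual_sub_modular f _ hA

theorem dual_congr {f g : Finset α → ℝ} (hfg : ∀ B ⊆ M, f B = g B) (hA : A ⊆ M) :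
    dual M f A = dual M g A := by
  have hsingle : ∑ j ∈ A, f {j} = ∑ j ∈ A, g {j} :=
    sum_congr rfl fun j hj => hfg {j} (singleton_subset_iff.mpr (hA hj))
  rw [dual, dual, hfg _ sdiff_subset, hfg M subset_rfl, hsingle]

theorem dual_dual {f : Finset α → ℝ} (hempty : f ∅ = 0) (hA : A ⊆ M) :
    dual M (dual M f) A = tightening M f A := by
  have hsplit : ∑ j ∈ M \ A, f {j} + ∑ j ∈ A, f {j} = ∑ j ∈ M, f {j} := sum_sdiff hA
  simp only [dual, tightening, Finset.sdiff_sdiff_eq_self hA, sdiff_self, bot_eq_empty, hempty,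
    sum_add_distrib, sum_sub_distrib, sum_singleton, sum_const, nsmul_eq_mul]
  linarith

theorem dual_dual_dual {f : Finset α → ℝ} (hempty : f ∅ = 0) (hA : A ⊆ M) :
    dual M (dual M (dual M f)) A = dual M f A :=
  (dual_congr (fun _ hB => dual_dual hempty hB) hA).trans (dual_tightening f hA)

end SetFunction

open SetFunction in
theorem double_dual_eq_tightening_general {α : Type*} [DecidableEq α] (M : Finset α) (f : Finset α → ℝ)
    (hempty : f ∅ = 0)
    (fd fdd fddd fdown : Finset α → ℝ)
    (hfd : ∀ A : Finset α, fd A = f (M \ A) + (∑ j ∈ A, f {j}) - f M)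
    (hfdd : ∀ A : Finset α, fdd A = fd (M \ A) + (∑ j ∈ A, fd {j}) - fd M)
    (hfddd : ∀ A : Finset α, fddd A = fdd (M \ A) + (∑ j ∈ A, fdd {j}) - fdd M)
    (hfdown : ∀ A : Finset α, fdown A = f A - ∑ i ∈ A, (f M - f (M \ {i}))) :
    (∀ A, A ⊆ M → fdd A = fdown A) ∧ (∀ A, A ⊆ M → fddd A = fd A) := by
  obtain rfl : fd = dual M f := funext hfd
  obtain rfl : fdd = dual M (dual M f) := funext hfdd
  obtain rfl : fddd = dual M (dual M (dual M f)) := funext hfddd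
  obtain rfl : fdown = tightening M f := funext hfdown
  exact ⟨fun _ hA => dual_dual hempty hA, fun _ hA => dual_dual_dual hempty hA⟩

/-- The double dual of a polymatroid equals its full tightening; in particular the
triple dual equals the dual. -/
theorem double_dual_eq_tightening {α : Type*} [DecidableEq α] (M : Finset α) (f : Finset α → ℝ)
    (hempty : f ∅ = 0)
    (hnonneg : ∀ A, A ⊆ M → 0 ≤ f A)
    (hmono : ∀ A B : Finset α, A ⊆ B → B ⊆ M → f A ≤ f B)
    (hsub : ∀ A B : Finset α, A ⊆ M → B ⊆ M → f (A ∪ B) + f (A ∩ B) ≤ f A + f B)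
    (fd fdd fddd fdown : Finset α → ℝ)
    (hfd : ∀ A : Finset α, fd A = f (M \ A) + (∑ j ∈ A, f {j}) - f M)
    (hfdd : ∀ A : Finset α, fdd A = fd (M \ A) + (∑ j ∈ A, fd {j}) - fd M)
    (hfddd : ∀ A : Finset α, fddd A = fdd (M \ A) + (∑ j ∈ A, fdd {j}) - fdd M)
    (hfdown : ∀ A : Finset α, fdown A = f A - ∑ i ∈ A, (f M - f (M \ {i}))) :
    (∀ A, A ⊆ M → fdd A = fdown A) ∧ (∀ A, A ⊆ M → fddd A = fd A) :=
  double_dual_eq_tightening_general M f hempty fd fdd fddd fdown hfd hfdd hfddd hfdown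
end

section
/- A polymatroid f on M is connected (f(A)+f(B) > f(M) for every partition M = A ⊔ B into nonempty parts) if and only if its dual f⊥ is connected. -/
/-!
For a partition `M = A ⊔ B` the singleton sums over `A` and `B` add up to the one over `M`, and
`f⊥ A`, `f⊥ B` evaluate `f` at the complements `B`, `A`; hence
`f⊥ A + f⊥ B - f⊥ M = f A + f B - f M`, and the two connectivity conditions coincide partition by
partition.
-/

namespace Polymatroid

variable {α G : Type*} [DecidableEq α] [AddCommGroup G]

def dual (M : Finset α) (f : Finset α → G) (A : Finset α) : G :=
  f (M \ A) + ∑ j ∈ A, f {j} - f M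

theorem dual_add_dual_sub_dual {M A B : Finset α} {f : Finset α → G} (hempty : f ∅ = 0)
    (hU : A ∪ B = M) (hD : Disjoint A B) :
    dual M f A + dual M f B - dual M f M = f A + f B - f M := by
  have hMA : M \ A = B := by rw [← hU]; exact Finset.union_sdiff_cancel_left hD
  have hMB : M \ B = A := by rw [← hU]; exact Finset.union_sdiff_cancel_right hD
  have hsum : ∑ j ∈ M, f {j} = ∑ j ∈ A, f {j} + ∑ j ∈ B, f {j} := by
    rw [← hU, Finset.sum_union hD]
  simp only [dual, hMA, hMB, Finset.sdiff_self, hempty, hsum]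
  abel

end Polymatroid

theorem connected_iff_dual_connected_general {α : Type*} [DecidableEq α] (M : Finset α)
    (f : Finset α → ℝ)
    (hempty : f ∅ = 0)
    (fd : Finset α → ℝ)
    (hfd : ∀ A : Finset α, fd A = f (M \ A) + (∑ j ∈ A, f {j}) - f M) :
    (∀ A B : Finset α, A ∪ B = M → Disjoint A B → A.Nonempty → B.Nonempty →
        f A + f B > f M) ↔
    (∀ A B : Finset α, A ∪ B = M → Disjoint A B → A.Nonempty → B.Nonempty →
        fd A + fd B > fd M) := by
  obtain rfl : fd = Polymatroid.dual M f := funext hfd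
  refine forall₂_congr fun A B => forall₄_congr fun hU hD _ _ => ?_
  rw [gt_iff_lt, gt_iff_lt, ← sub_pos, ← sub_pos (b := Polymatroid.dual M f M),
    Polymatroid.dual_add_dual_sub_dual hempty hU hD]

/-- A polymatroid is connected if and only if its dual is connected. -/
theorem connected_iff_dual_connected {α : Type*} [DecidableEq α] (M : Finset α)
    (f : Finset α → ℝ)
    (hempty : f ∅ = 0)
    (hnonneg : ∀ A, A ⊆ M → 0 ≤ f A)
    (hmono : ∀ A B : Finset α, A ⊆ B → B ⊆ M → f A ≤ f B)
    (hsub : ∀ A B : Finset α, A ⊆ M → B ⊆ M → f (A ∪ B) + f (A ∩ B) ≤ f A + f B)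
    (fd : Finset α → ℝ)
    (hfd : ∀ A : Finset α, fd A = f (M \ A) + (∑ j ∈ A, f {j}) - f M) :
    (∀ A B : Finset α, A ∪ B = M → Disjoint A B → A.Nonempty → B.Nonempty →
        f A + f B > f M) ↔
    (∀ A B : Finset α, A ∪ B = M → Disjoint A B → A.Nonempty → B.Nonempty →
        fd A + fd B > fd M) :=
  connected_iff_dual_connected_general M f hempty fd hfd
end

section
/- Suppose the polymatroid f on ground set {s}∪P realizes the access structure A ⊆ 2^P (for A ⊆ P: f({s}∪A)=f(A) iff A ∈ A, and f({s}∪A)=f(A)+f({s}) iff A ∉ A). If i ∈ P is important for A, then f({i}) ≥ f({s}). -/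
open Finset

/-- The polymatroid rank function `f` on ground set `{s} ∪ P` realizes the access
structure `𝒜 ⊆ 2^P`. -/
def Realizes {α : Type*} [DecidableEq α] (s : α) (P : Finset α) (𝒜 : Set (Finset α))
    (f : Finset α → ℝ) : Prop :=
  ∀ A : Finset α, A ⊆ P →
    (A ∈ 𝒜 ↔ f (insert s A) = f A) ∧ (A ∉ 𝒜 ↔ f (insert s A) = f A + f {s})

section

variable {α : Type*} [DecidableEq α]

theorem union_le_add_of_submodular {E : Finset α} {f : Finset α → ℝ}
    (hnonneg : ∀ A, A ⊆ E → 0 ≤ f A)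
    (hsub : ∀ A B : Finset α, A ⊆ E → B ⊆ E → f (A ∪ B) + f (A ∩ B) ≤ f A + f B)
    {A B : Finset α} (hA : A ⊆ E) (hB : B ⊆ E) :
    f (A ∪ B) ≤ f A + f B := by
  have := hnonneg (A ∩ B) (inter_subset_left.trans hA)
  linarith [hsub A B hA hB]

namespace Realizes

variable {s : α} {P : Finset α} {𝒜 : Set (Finset α)} {f : Finset α → ℝ}

theorem insert_eq_of_mem (hreal : Realizes s P 𝒜 f) {A : Finset α} (hA : A ⊆ P)
    (hmem : A ∈ 𝒜) : f (insert s A) = f A :=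
  (hreal A hA).1.1 hmem

theorem insert_eq_add_of_notMem (hreal : Realizes s P 𝒜 f) {A : Finset α} (hA : A ⊆ P)
    (hnotMem : A ∉ 𝒜) : f (insert s A) = f A + f {s} :=
  (hreal A hA).2.1 hnotMem

end Realizes

end

theorem share_ge_secret_general {α : Type*} [DecidableEq α] (s : α) (P : Finset α)
    (𝒜 : Set (Finset α)) (f : Finset α → ℝ)
    (hnonneg : ∀ A, A ⊆ insert s P → 0 ≤ f A)
    (hmono : ∀ A B : Finset α, A ⊆ B → B ⊆ insert s P → f A ≤ f B)
    (hsub : ∀ A B : Finset α, A ⊆ insert s P → B ⊆ insert s P →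
        f (A ∪ B) + f (A ∩ B) ≤ f A + f B)
    (hreal : Realizes s P 𝒜 f)
    (i : α) (hi : i ∈ P)
    (himp : ∃ B : Finset α, B ⊆ P \ {i} ∧ B ∉ 𝒜 ∧ insert i B ∈ 𝒜) :
    f {i} ≥ f {s} := by
  obtain ⟨B, hBi, hBnotMem, hiBmem⟩ := himp
  have hBP : B ⊆ P := hBi.trans sdiff_subset
  have hiBP : insert i B ⊆ P := insert_subset hi hBP
  have hPE : P ⊆ insert s P := subset_insert s P
  have key : f B + f {s} ≤ f {i} + f B :=
    calc f B + f {s} = f (insert s B) := (hreal.insert_eq_add_of_notMem hBP hBnotMem).symm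
      _ ≤ f (insert s (insert i B)) :=
          hmono _ _ (insert_subset_insert s (subset_insert i B)) (insert_subset_insert s hiBP)
      _ = f ({i} ∪ B) := by rw [hreal.insert_eq_of_mem hiBP hiBmem, insert_eq]
      _ ≤ f {i} + f B := union_le_add_of_submodular hnonneg hsub
          (singleton_subset_iff.2 (hPE hi)) (hBP.trans hPE)
  linarith

/-- The share of an important participant is at least as large as the secret. -/
theorem share_ge_secret {α : Type*} [DecidableEq α] (s : α) (P : Finset α) (hs : s ∉ P)
    (𝒜 : Set (Finset α)) (f : Finset α → ℝ)
    (hempty : f ∅ = 0)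
    (hnonneg : ∀ A, A ⊆ insert s P → 0 ≤ f A)
    (hmono : ∀ A B : Finset α, A ⊆ B → B ⊆ insert s P → f A ≤ f B)
    (hsub : ∀ A B : Finset α, A ⊆ insert s P → B ⊆ insert s P →
        f (A ∪ B) + f (A ∩ B) ≤ f A + f B)
    (hreal : Realizes s P 𝒜 f)
    (i : α) (hi : i ∈ P)
    (himp : ∃ B : Finset α, B ⊆ P \ {i} ∧ B ∉ 𝒜 ∧ insert i B ∈ 𝒜) :
    f {i} ≥ f {s} :=
  share_ge_secret_general s P 𝒜 f hnonneg hmono hsub hreal i hi himp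
end

section
/- A polymatroid f on {s}∪P realizes the access structure A if and only if the tightening f↓i at any participant i ∈ P realizes A. Consequently f realizes A iff its full tightening f↓ (at all participants) realizes A. -/
/-! Both tightenings subtract from `f` a quantity that depends only on the participants in
the argument, so neither the marginal value `f (insert s A) - f A` nor `f {s}` changes. -/

section Realizes

variable {α : Type*} [DecidableEq α] {s : α} {P : Finset α} {𝒜 : Set (Finset α)}

theorem realizes_congr {f h : Finset α → ℝ}
    (hmarg : ∀ A ⊆ P, h (insert s A) - h A = f (insert s A) - f A) (hs : h {s} = f {s}) :
    Realizes s P 𝒜 h ↔ Realizes s P 𝒜 f := by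
  refine forall_congr' fun A => imp_congr_right fun hA => ?_
  have hA := hmarg A hA
  have hzero : h (insert s A) = h A ↔ f (insert s A) = f A := by
    rw [← sub_eq_zero, hA, sub_eq_zero]
  have hfull : h (insert s A) = h A + h {s} ↔ f (insert s A) = f A + f {s} := by
    constructor <;> intro _ <;> linarith
  rw [hzero, hfull]

theorem realizes_sub_comp_inter_iff (hsP : s ∉ P) (f φ : Finset α → ℝ) (hφ : φ ∅ = 0) :
    Realizes s P 𝒜 (fun A => f A - φ (A ∩ P)) ↔ Realizes s P 𝒜 f := by
  refine realizes_congr (fun A _ => ?_) ?_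
  · rw [Finset.insert_inter_of_notMem hsP]
    ring
  · simp [Finset.singleton_inter_of_notMem hsP, hφ]

end Realizes

theorem realizes_iff_tightening_realizes_general {α : Type*} [DecidableEq α] (s : α) (P : Finset α)
    (hs : s ∉ P) (𝒜 : Set (Finset α)) (f : Finset α → ℝ)
    (i : α) (hi : i ∈ P)
    (g gall : Finset α → ℝ)
    (hg : ∀ A : Finset α, g A =
      if i ∈ A then f A - (f (insert s P) - f (insert s P \ {i})) else f A)
    (hgall : ∀ A : Finset α, gall A =
      f A - ∑ j ∈ A ∩ P, (f (insert s P) - f (insert s P \ {j}))) :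
    (Realizes s P 𝒜 f ↔ Realizes s P 𝒜 g) ∧
    (Realizes s P 𝒜 f ↔ Realizes s P 𝒜 gall) := by
  set δ : α → ℝ := fun j => f (insert s P) - f (insert s P \ {j})
  have hg' : g = fun A => f A - (if i ∈ A ∩ P then δ i else 0) := by
    ext A
    by_cases hiA : i ∈ A <;> simp [hg, hiA, hi, δ]
  have hgall' : gall = fun A => f A - ∑ j ∈ A ∩ P, δ j := funext hgall
  rw [hg', hgall', realizes_sub_comp_inter_iff hs f (fun B => if i ∈ B then δ i else 0) (by simp),
    realizes_sub_comp_inter_iff hs f (fun B => ∑ j ∈ B, δ j) Finset.sum_empty]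
  exact ⟨Iff.rfl, Iff.rfl⟩

/-- Realizing an access structure is invariant under tightening at a participant,
and under the full tightening at all participants. -/
theorem realizes_iff_tightening_realizes {α : Type*} [DecidableEq α] (s : α) (P : Finset α)
    (hs : s ∉ P) (𝒜 : Set (Finset α)) (f : Finset α → ℝ)
    (hempty : f ∅ = 0)
    (hnonneg : ∀ A, A ⊆ insert s P → 0 ≤ f A)
    (hmono : ∀ A B : Finset α, A ⊆ B → B ⊆ insert s P → f A ≤ f B)
    (hsub : ∀ A B : Finset α, A ⊆ insert s P → B ⊆ insert s P →
        f (A ∪ B) + f (A ∩ B) ≤ f A + f B)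
    (i : α) (hi : i ∈ P)
    (g gall : Finset α → ℝ)
    (hg : ∀ A : Finset α, g A =
      if i ∈ A then f A - (f (insert s P) - f (insert s P \ {i})) else f A)
    (hgall : ∀ A : Finset α, gall A =
      f A - ∑ j ∈ A ∩ P, (f (insert s P) - f (insert s P \ {j}))) :
    (Realizes s P 𝒜 f ↔ Realizes s P 𝒜 g) ∧
    (Realizes s P 𝒜 f ↔ Realizes s P 𝒜 gall) :=
  realizes_iff_tightening_realizes_general s P hs 𝒜 f i hi g gall hg hgall
end

section
/- Let A be a connected access structure realized by the polymatroid f on {s}∪P. If i ∈ P satisfies f({i}) = f({s}), then f is tight at i, i.e. f(M) = f(M∖{i}) where M = {s}∪P. -/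
def IsSubmodularOn {α : Type*} [DecidableEq α] (E : Finset α) (f : Finset α → ℝ) : Prop :=
  ∀ A B : Finset α, A ⊆ E → B ⊆ E → f (A ∪ B) + f (A ∩ B) ≤ f A + f B

namespace IsSubmodularOn

variable {α : Type*} [DecidableEq α] {E : Finset α} {f : Finset α → ℝ}

theorem union_le_add_of_disjoint (hf : IsSubmodularOn E f) (hempty : f ∅ = 0)
    {A B : Finset α} (hA : A ⊆ E) (hB : B ⊆ E) (hAB : Disjoint A B) :
    f (A ∪ B) ≤ f A + f B := by
  have h := hf A B hA hB
  rwa [Finset.disjoint_iff_inter_eq_empty.mp hAB, hempty, add_zero] at h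

theorem insert_sub_le_insert_sub (hf : IsSubmodularOn E f) {C D : Finset α} {i : α}
    (hCD : C ⊆ D) (hD : D ⊆ E) (hi : i ∈ E) (hiD : i ∉ D) :
    f (insert i D) - f D ≤ f (insert i C) - f C := by
  have h := hf D (insert i C) hD (Finset.insert_subset hi (hCD.trans hD))
  rw [Finset.union_insert, Finset.union_eq_left.mpr hCD, Finset.inter_insert_of_notMem hiD,
    Finset.inter_eq_right.mpr hCD] at h
  linarith

end IsSubmodularOn

theorem minimal_share_is_tight_general {α : Type*} [DecidableEq α] (s : α) (P : Finset α)
    (hs : s ∉ P) (𝒜 : Set (Finset α)) (f : Finset α → ℝ)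
    (hempty : f ∅ = 0)
    (hmono : ∀ A B : Finset α, A ⊆ B → B ⊆ insert s P → f A ≤ f B)
    (hsub : ∀ A B : Finset α, A ⊆ insert s P → B ⊆ insert s P →
        f (A ∪ B) + f (A ∩ B) ≤ f A + f B)
    (hreal : Realizes s P 𝒜 f)
    (hconn : ∀ i ∈ P, ∃ B : Finset α, B ⊆ P \ {i} ∧ B ∉ 𝒜 ∧ insert i B ∈ 𝒜)
    (i : α) (hi : i ∈ P) (hshare : f {i} = f {s}) :
    f (insert s P) = f (insert s P \ {i}) := by
  have hsub : IsSubmodularOn (insert s P) f := hsub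
  obtain ⟨B, hBsub, hBout, hiBin⟩ := hconn i hi
  obtain ⟨hBP, hBi⟩ := Finset.subset_sdiff.mp hBsub
  have hiB : i ∉ B := Finset.disjoint_singleton_right.mp hBi
  have hsi : s ≠ i := fun h => hs (h ▸ hi)
  have hiBP : insert i B ⊆ P := Finset.insert_subset hi hBP
  have hsiB : insert s (insert i B) ⊆ insert s P := Finset.insert_subset_insert s hiBP
  have hsB : insert s B ⊆ insert s P \ {i} := Finset.subset_sdiff.mpr
    ⟨Finset.insert_subset_insert s hBP,
      Finset.disjoint_singleton_right.mpr (by simp [hsi.symm, hiB])⟩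
  have hi_redundant : f (insert s (insert i B)) = f (insert s B) := by
    refine le_antisymm ?_
      (hmono _ _ (Finset.insert_subset_insert s (Finset.subset_insert i B)) hsiB)
    calc f (insert s (insert i B)) = f (insert i B) := ((hreal _ hiBP).1).mp hiBin
      _ ≤ f {i} + f B := hsub.union_le_add_of_disjoint hempty
          (by simp [hi]) (hBP.trans (Finset.subset_insert s P))
          (Finset.disjoint_singleton_left.mpr hiB)
      _ = f (insert s B) := by rw [((hreal B hBP).2).mp hBout, hshare, add_comm]
  have hM : insert i (insert s P \ {i}) = insert s P := by
    rw [Finset.sdiff_singleton_eq_erase, Finset.insert_erase (Finset.mem_insert_of_mem hi)]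
  have hmarginal := hsub.insert_sub_le_insert_sub hsB Finset.sdiff_subset
    (Finset.mem_insert_of_mem hi) (by simp)
  rw [hM, Finset.insert_comm, hi_redundant] at hmarginal
  linarith [hmono _ _ (Finset.sdiff_subset (s := insert s P) (t := {i})) le_rfl]

/-- In a realization of a connected access structure, any participant whose share
has the same size as the secret is tight. -/
theorem minimal_share_is_tight {α : Type*} [DecidableEq α] (s : α) (P : Finset α)
    (hs : s ∉ P) (𝒜 : Set (Finset α)) (f : Finset α → ℝ)
    (hempty : f ∅ = 0)
    (hnonneg : ∀ A, A ⊆ insert s P → 0 ≤ f A)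
    (hmono : ∀ A B : Finset α, A ⊆ B → B ⊆ insert s P → f A ≤ f B)
    (hsub : ∀ A B : Finset α, A ⊆ insert s P → B ⊆ insert s P →
        f (A ∪ B) + f (A ∩ B) ≤ f A + f B)
    (hreal : Realizes s P 𝒜 f)
    (hconn : ∀ i ∈ P, ∃ B : Finset α, B ⊆ P \ {i} ∧ B ∉ 𝒜 ∧ insert i B ∈ 𝒜)
    (i : α) (hi : i ∈ P) (hshare : f {i} = f {s}) :
    f (insert s P) = f (insert s P \ {i}) :=
  minimal_share_is_tight_general s P hs 𝒜 f hempty hmono hsub hreal hconn i hi hshare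
end

section
/- A matroid is connected (h(A)+h(B) > h(M) for every partition M = A ⊔ B into nonempty sets) if and only if every pair of distinct elements of M lies in a common circuit. -/
/-- `A` is dependent in the matroid with rank function `h`. -/
def MatDep {α : Type*} (h : Finset α → ℤ) (A : Finset α) : Prop :=
  h A < A.card

/-- A circuit is a minimal dependent subset of the ground set `M`. -/
def MatCircuit {α : Type*} (M : Finset α) (h : Finset α → ℤ) (C : Finset α) : Prop :=
  C ⊆ M ∧ MatDep h C ∧ ∀ C' : Finset α, C' ⊂ C → ¬ MatDep h C'

open Finset
section Aux
variable {α : Type*} [DecidableEq α] (M : Finset α) (h : Finset α → ℤ)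

lemma aux_unit (hempty : h ∅ = 0)
    (hsub : ∀ A B : Finset α, A ⊆ M → B ⊆ M → h (A ∪ B) + h (A ∩ B) ≤ h A + h B)
    (hsingle : ∀ i ∈ M, h {i} ≤ 1)
    {A : Finset α} (hA : A ⊆ M) {e : α} (he : e ∈ M) :
    h (insert e A) ≤ h A + 1 := by
  by_cases hmem : e ∈ A
  · rw [Finset.insert_eq_self.2 hmem]; linarith
  · have hs := hsub {e} A (by simpa using he) hA
    rw [Finset.singleton_inter_of_notMem hmem, hempty, ← Finset.insert_eq] at hs
    have := hsingle e he
    linarith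

lemma aux_card (hempty : h ∅ = 0)
    (hsub : ∀ A B : Finset α, A ⊆ M → B ⊆ M → h (A ∪ B) + h (A ∩ B) ≤ h A + h B)
    (hsingle : ∀ i ∈ M, h {i} ≤ 1)
    {A : Finset α} (hA : A ⊆ M) : h A ≤ A.card := by
  induction A using Finset.induction_on with
  | empty => simp [hempty]
  | insert a s hnot ih =>
    have hsM : s ⊆ M := (Finset.subset_insert a s).trans hA
    have haM : a ∈ M := hA (Finset.mem_insert_self a s)
    have h1 := aux_unit M h hempty hsub hsingle hsM haM
    have h2 := ih hsM
    rw [Finset.card_insert_of_notMem hnot]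
    push_cast
    linarith

lemma aux_union_card (hempty : h ∅ = 0)
    (hsub : ∀ A B : Finset α, A ⊆ M → B ⊆ M → h (A ∪ B) + h (A ∩ B) ≤ h A + h B)
    (hsingle : ∀ i ∈ M, h {i} ≤ 1)
    {S : Finset α} (hS : S ⊆ M) {A : Finset α} (hA : A ⊆ M) :
    h (A ∪ S) ≤ h A + S.card := by
  induction S using Finset.induction_on with
  | empty => simp
  | insert a s hnot ih =>
    have hsM : s ⊆ M := (Finset.subset_insert a s).trans hS
    have haM : a ∈ M := hS (Finset.mem_insert_self a s)
    have h1 : h (insert a (A ∪ s)) ≤ h (A ∪ s) + 1 :=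
      aux_unit M h hempty hsub hsingle (Finset.union_subset hA hsM) haM
    have h2 := ih hsM
    rw [Finset.union_insert, Finset.card_insert_of_notMem hnot]
    push_cast
    linarith

lemma aux_indep_subset (hempty : h ∅ = 0)
    (hsub : ∀ A B : Finset α, A ⊆ M → B ⊆ M → h (A ∪ B) + h (A ∩ B) ≤ h A + h B)
    (hsingle : ∀ i ∈ M, h {i} ≤ 1)
    {I C : Finset α} (hIM : I ⊆ M) (hI : h I = I.card) (hCI : C ⊆ I) :
    h C = C.card := by
  have hCM : C ⊆ M := hCI.trans hIM
  have h1 : h C ≤ C.card := aux_card M h hempty hsub hsingle hCM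
  have h2 : h (C ∪ (I \ C)) ≤ h C + (I \ C).card :=
    aux_union_card M h hempty hsub hsingle ((Finset.sdiff_subset).trans hIM) hCM
  rw [Finset.union_sdiff_of_subset hCI] at h2
  have h3 : (I \ C).card = I.card - C.card := Finset.card_sdiff_of_subset hCI
  have h4 : C.card ≤ I.card := Finset.card_le_card hCI
  have h5 : ((I \ C).card : ℤ) = (I.card : ℤ) - C.card := by rw [h3]; push_cast [Nat.cast_sub h4]; ring
  omega

end Aux
section Aux2
variable {α : Type*} [DecidableEq α] (M : Finset α) (h : Finset α → ℤ)
  (hempty : h ∅ = 0)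
  (hmono : ∀ A B : Finset α, A ⊆ B → B ⊆ M → h A ≤ h B)
  (hsub : ∀ A B : Finset α, A ⊆ M → B ⊆ M → h (A ∪ B) + h (A ∩ B) ≤ h A + h B)
  (hsingle : ∀ i ∈ M, h {i} ≤ 1)

set_option linter.unusedSectionVars false
include hempty hmono hsub hsingle

lemma aux_basis {X : Finset α} (hX : X ⊆ M) :
    ∃ I : Finset α, I ⊆ X ∧ h I = I.card ∧ h I = h X := by
  induction X using Finset.induction_on with
  | empty => exact ⟨∅, Finset.Subset.refl _, by simp [hempty], rfl⟩
  | insert a s hnot ih =>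
    have hsM : s ⊆ M := (Finset.subset_insert a s).trans hX
    have haM : a ∈ M := hX (Finset.mem_insert_self a s)
    obtain ⟨I, hIs, hIind, hIr⟩ := ih hsM
    have hIM : I ⊆ M := hIs.trans hsM
    by_cases hcase : h (insert a s) = h s
    · exact ⟨I, hIs.trans (Finset.subset_insert a s), hIind, by rw [hcase]; exact hIr⟩
    · have hle : h s ≤ h (insert a s) := hmono s (insert a s) (Finset.subset_insert a s) hX
      have hle2 : h (insert a s) ≤ h s + 1 := aux_unit M h hempty hsub hsingle hsM haM
      have heq : h (insert a s) = h s + 1 := by omega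
      have haI : a ∉ I := fun hmem => hnot (hIs hmem)
      refine ⟨insert a I, Finset.insert_subset_insert a hIs, ?_, ?_⟩
      · -- independence of insert a I
        have hs2 := hsub (insert a I) s (Finset.insert_subset haM hIM) hsM
        have hu : insert a I ∪ s = insert a s := by
          rw [Finset.insert_union]
          congr 1
          exact Finset.union_eq_right.2 hIs
        have hi : (insert a I) ∩ s = I := by
          rw [Finset.insert_inter_of_notMem hnot]
          exact Finset.inter_eq_left.2 hIs
        rw [hu, hi] at hs2
        have hub : h (insert a I) ≤ (insert a I).card :=
          aux_card M h hempty hsub hsingle (Finset.insert_subset haM hIM)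
        rw [Finset.card_insert_of_notMem haI]
        rw [Finset.card_insert_of_notMem haI] at hub
        push_cast at hub ⊢
        omega
      · have hs2 := hsub (insert a I) s (Finset.insert_subset haM hIM) hsM
        have hu : insert a I ∪ s = insert a s := by
          rw [Finset.insert_union]; congr 1; exact Finset.union_eq_right.2 hIs
        have hi : (insert a I) ∩ s = I := by
          rw [Finset.insert_inter_of_notMem hnot]; exact Finset.inter_eq_left.2 hIs
        rw [hu, hi] at hs2
        have hub : h (insert a I) ≤ (insert a I).card :=
          aux_card M h hempty hsub hsingle (Finset.insert_subset haM hIM)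
        rw [Finset.card_insert_of_notMem haI] at hub
        have hc : h I = I.card := hIind
        push_cast at hub
        omega

lemma aux_dep_circuit {A : Finset α} (hA : A ⊆ M) (hdep : MatDep h A) :
    ∃ C : Finset α, C ⊆ A ∧ MatCircuit M h C := by
  classical
  have hne : (A.powerset.filter (fun S => MatDep h S)).Nonempty :=
    ⟨A, by simp [Finset.mem_filter, Finset.mem_powerset, hdep]⟩
  obtain ⟨C, hCmem, hCmin⟩ := Finset.exists_min_image _ (fun S => S.card) hne
  rw [Finset.mem_filter, Finset.mem_powerset] at hCmem
  refine ⟨C, hCmem.1, hCmem.1.trans hA, hCmem.2, ?_⟩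
  intro C' hC' hdep'
  have : C.card ≤ C'.card := hCmin C' (by
    rw [Finset.mem_filter, Finset.mem_powerset]
    exact ⟨hC'.subset.trans hCmem.1, hdep'⟩)
  have := Finset.card_lt_card hC'
  omega

lemma aux_circuit_nonempty {C : Finset α} (hC : MatCircuit M h C) : C.Nonempty := by
  rcases Finset.eq_empty_or_nonempty C with rfl | hne
  · exfalso; have := hC.2.1; rw [MatDep, hempty] at this; simp at this
  · exact hne

lemma aux_circuit_ssubset_indep {C C' : Finset α} (hC : MatCircuit M h C) (hss : C' ⊂ C) :
    h C' = C'.card := by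
  have h1 : ¬ MatDep h C' := hC.2.2 C' hss
  have h2 : h C' ≤ C'.card :=
    aux_card M h hempty hsub hsingle ((hss.subset).trans hC.1)
  rw [MatDep, not_lt] at h1
  omega

lemma aux_circuit_erase {C : Finset α} (hC : MatCircuit M h C) {g : α} (hg : g ∈ C) :
    h (C.erase g) = (C.card : ℤ) - 1 := by
  have hss : C.erase g ⊂ C := Finset.erase_ssubset hg
  have := aux_circuit_ssubset_indep M h hempty hmono hsub hsingle hC hss
  rw [this, Finset.card_erase_of_mem hg]
  have : 1 ≤ C.card := Finset.card_pos.2 ⟨g, hg⟩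
  push_cast [Nat.cast_sub this]
  ring

lemma aux_circuit_rank {C : Finset α} (hC : MatCircuit M h C) :
    h C = (C.card : ℤ) - 1 := by
  obtain ⟨g, hg⟩ := aux_circuit_nonempty M h hempty hmono hsub hsingle hC
  have h1 : h (C.erase g) ≤ h C := hmono _ _ (Finset.erase_subset g C) hC.1
  have h2 := aux_circuit_erase M h hempty hmono hsub hsingle hC hg
  have h3 := hC.2.1
  rw [MatDep] at h3
  omega

lemma aux_circuit_eq_of_subset {C C' : Finset α} (hC : MatCircuit M h C)
    (hC' : MatCircuit M h C') (hss : C' ⊆ C) : C' = C := by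
  by_contra hne
  exact hC.2.2 C' (lt_of_le_of_ne hss hne) hC'.2.1

end Aux2
section Aux3
variable {α : Type*} [DecidableEq α] (M : Finset α) (h : Finset α → ℤ)
  (hempty : h ∅ = 0)
  (hmono : ∀ A B : Finset α, A ⊆ B → B ⊆ M → h A ≤ h B)
  (hsub : ∀ A B : Finset α, A ⊆ M → B ⊆ M → h (A ∪ B) + h (A ∩ B) ≤ h A + h B)
  (hsingle : ∀ i ∈ M, h {i} ≤ 1)

set_option linter.unusedSectionVars false
include hempty hmono hsub hsingle

lemma aux_span_remove {C X : Finset α} (hC : MatCircuit M h C) (hCX : C ⊆ X)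
    (hXM : X ⊆ M) {g : α} (hg : g ∈ C) : h (X.erase g) = h X := by
  have hu : X.erase g ∪ C = X := by
    ext a
    simp only [Finset.mem_union, Finset.mem_erase]
    constructor
    · rintro (⟨_, ha⟩ | ha)
      · exact ha
      · exact hCX ha
    · intro ha
      by_cases hae : a = g
      · exact Or.inr (hae ▸ hg)
      · exact Or.inl ⟨hae, ha⟩
  have hi : X.erase g ∩ C = C.erase g := by
    ext a
    simp only [Finset.mem_inter, Finset.mem_erase]
    constructor
    · rintro ⟨⟨hne, _⟩, hc⟩; exact ⟨hne, hc⟩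
    · rintro ⟨hne, hc⟩; exact ⟨⟨hne, hCX hc⟩, hc⟩
  have hs := hsub (X.erase g) C ((Finset.erase_subset g X).trans hXM) (hC.1)
  rw [hu, hi] at hs
  have h1 := aux_circuit_erase M h hempty hmono hsub hsingle hC hg
  have h2 := aux_circuit_rank M h hempty hmono hsub hsingle hC
  have h3 : h (X.erase g) ≤ h X := hmono _ _ (Finset.erase_subset g X) hXM
  omega

lemma aux_circuit_through {X : Finset α} (hXM : X ⊆ M) {f : α} (hf : f ∈ X)
    (hrk : h (X.erase f) = h X) :
    ∃ C : Finset α, MatCircuit M h C ∧ f ∈ C ∧ C ⊆ X := by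
  obtain ⟨I, hIe, hIind, hIr⟩ :=
    aux_basis M h hempty hmono hsub hsingle ((Finset.erase_subset f X).trans hXM)
  have hfI : f ∉ I := fun hmem => (Finset.mem_erase.1 (hIe hmem)).1 rfl
  have hIX : I ⊆ X := hIe.trans (Finset.erase_subset f X)
  have hEX : insert f I ⊆ X := Finset.insert_subset hf hIX
  have hEM : insert f I ⊆ M := hEX.trans hXM
  have hdep : MatDep h (insert f I) := by
    have h1 : h (insert f I) ≤ h X := hmono _ _ hEX hXM
    rw [MatDep, Finset.card_insert_of_notMem hfI]
    push_cast
    omega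
  obtain ⟨C, hCE, hCcirc⟩ := aux_dep_circuit M h hempty hmono hsub hsingle hEM hdep
  refine ⟨C, hCcirc, ?_, hCE.trans hEX⟩
  by_contra hfC
  have hCI : C ⊆ I := fun a ha => by
    rcases Finset.mem_insert.1 (hCE ha) with rfl | h'
    · exact absurd ha hfC
    · exact h'
  have := aux_indep_subset M h hempty hsub hsingle (hIX.trans hXM) hIind hCI
  have hd := hCcirc.2.1
  rw [MatDep] at hd
  omega

lemma aux_strong_elim {C1 C2 : Finset α} (hC1 : MatCircuit M h C1) (hC2 : MatCircuit M h C2)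
    {e f : α} (he1 : e ∈ C1) (he2 : e ∈ C2) (hf1 : f ∈ C1) (hf2 : f ∉ C2) :
    ∃ C3 : Finset α, MatCircuit M h C3 ∧ f ∈ C3 ∧ C3 ⊆ (C1 ∪ C2).erase e := by
  set D := (C1 ∪ C2).erase e with hD
  have hUM : C1 ∪ C2 ⊆ M := Finset.union_subset hC1.1 hC2.1
  have hDM : D ⊆ M := (Finset.erase_subset e (C1 ∪ C2)).trans hUM
  have hfe : f ≠ e := fun hfe => hf2 (hfe ▸ he2)
  have hfD : f ∈ D := Finset.mem_erase.2 ⟨hfe, Finset.mem_union_left _ hf1⟩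
  have s1 : h ((C1 ∪ C2).erase f) = h (C1 ∪ C2) :=
    aux_span_remove M h hempty hmono hsub hsingle hC1 Finset.subset_union_left hUM hf1
  have hu : D.erase f ∪ C2 = (C1 ∪ C2).erase f := by
    ext a
    simp only [hD, Finset.mem_union, Finset.mem_erase]
    constructor
    · rintro (⟨hne, _, ha⟩ | ha)
      · exact ⟨hne, ha⟩
      · exact ⟨fun hh => hf2 (hh ▸ ha), Or.inr ha⟩
    · rintro ⟨hne, ha⟩
      by_cases hae : a = e
      · exact Or.inr (hae ▸ he2)
      · exact Or.inl ⟨hne, hae, ha⟩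
  have hi : D.erase f ∩ C2 = C2.erase e := by
    ext a
    simp only [hD, Finset.mem_inter, Finset.mem_erase]
    constructor
    · rintro ⟨⟨_, hae, _⟩, ha⟩; exact ⟨hae, ha⟩
    · rintro ⟨hae, ha⟩
      exact ⟨⟨fun hh => hf2 (hh ▸ ha), hae, Finset.mem_union.2 (Or.inr ha)⟩, ha⟩
  have hs := hsub (D.erase f) C2 ((Finset.erase_subset f D).trans hDM) hC2.1
  rw [hu, hi] at hs
  have h1 := aux_circuit_erase M h hempty hmono hsub hsingle hC2 he2
  have h2 := aux_circuit_rank M h hempty hmono hsub hsingle hC2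
  have h3 : h (D.erase f) ≤ h D := hmono _ _ (Finset.erase_subset f D) hDM
  have h4 : h D ≤ h (C1 ∪ C2) := hmono _ _ (Finset.erase_subset e _) hUM
  have key : h (D.erase f) = h D := by omega
  obtain ⟨C3, hc, hfc, hcd⟩ :=
    aux_circuit_through M h hempty hmono hsub hsingle hDM hfD key
  exact ⟨C3, hc, hfc, hcd⟩

end Aux3
section Aux4
variable {α : Type*} [DecidableEq α] (M : Finset α) (h : Finset α → ℤ)
  (hempty : h ∅ = 0)
  (hmono : ∀ A B : Finset α, A ⊆ B → B ⊆ M → h A ≤ h B)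
  (hsub : ∀ A B : Finset α, A ⊆ M → B ⊆ M → h (A ∪ B) + h (A ∩ B) ≤ h A + h B)
  (hsingle : ∀ i ∈ M, h {i} ≤ 1)

set_option linter.unusedSectionVars false
include hempty hmono hsub hsingle

lemma aux_trans : ∀ n : ℕ, ∀ C1 C2 : Finset α, MatCircuit M h C1 → MatCircuit M h C2 →
    (C1 ∩ C2).Nonempty → (C1 ∪ C2).card ≤ n →
    ∀ x ∈ C1, ∀ w ∈ C2, ∃ C, MatCircuit M h C ∧ x ∈ C ∧ w ∈ C := by
  intro n
  induction n with
  | zero =>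
    intro C1 C2 h1 h2 hne hcard x hx w hw
    exfalso
    have hxu : x ∈ C1 ∪ C2 := Finset.mem_union_left _ hx
    have := Finset.card_pos.2 ⟨x, hxu⟩
    omega
  | succ n ih =>
    intro C1 C2 h1 h2 hne hcard x hx w hw
    by_cases hx2 : x ∈ C2
    · exact ⟨C2, h2, hx2, hw⟩
    by_cases hw1 : w ∈ C1
    · exact ⟨C1, h1, hx, hw1⟩
    obtain ⟨e, he⟩ := hne
    have he1 : e ∈ C1 := (Finset.mem_inter.1 he).1
    have he2 : e ∈ C2 := (Finset.mem_inter.1 he).2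
    obtain ⟨C3, h3, hx3, h3sub⟩ :=
      aux_strong_elim M h hempty hmono hsub hsingle h1 h2 he1 he2 hx hx2
    by_cases hw3 : w ∈ C3
    · exact ⟨C3, h3, hx3, hw3⟩
    have he3 : e ∉ C3 := fun hmem => (Finset.mem_erase.1 (h3sub hmem)).1 rfl
    have h3union : C3 ⊆ C1 ∪ C2 := h3sub.trans (Finset.erase_subset _ _)
    have hnotsub : ¬ C3 ⊆ C1 := by
      intro hss
      have heq3 := aux_circuit_eq_of_subset M h hempty hmono hsub hsingle h1 h3 hss
      exact he3 (heq3 ▸ he1)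
    obtain ⟨f, hf3, hf1⟩ := Finset.not_subset.1 hnotsub
    have hf2 : f ∈ C2 := (Finset.mem_union.1 (h3union hf3)).resolve_left hf1
    by_cases hcase1 : (C3 ∪ C2).card < (C1 ∪ C2).card
    · exact ih C3 C2 h3 h2 ⟨f, Finset.mem_inter.2 ⟨hf3, hf2⟩⟩ (by omega) x hx3 w hw
    · have hsub32 : C3 ∪ C2 ⊆ C1 ∪ C2 :=
        Finset.union_subset h3union Finset.subset_union_right
      have hequ : C3 ∪ C2 = C1 ∪ C2 :=
        Finset.eq_of_subset_of_card_le hsub32 (by omega)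
      obtain ⟨C4, h4, hw4, h4sub⟩ :=
        aux_strong_elim M h hempty hmono hsub hsingle h2 h3 hf2 hf3 hw hw3
      by_cases hx4 : x ∈ C4
      · exact ⟨C4, h4, hx4, hw4⟩
      have h4union : C4 ⊆ C2 ∪ C3 := h4sub.trans (Finset.erase_subset _ _)
      have h4union' : C4 ⊆ C1 ∪ C2 := fun a ha =>
        (Finset.mem_union.1 (h4union ha)).elim (Finset.mem_union_right _) (fun h' => h3union h')
      have hf4 : f ∉ C4 := fun hmem => (Finset.mem_erase.1 (h4sub hmem)).1 rfl
      have hnot4 : ¬ C4 ⊆ C2 := by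
        intro hss
        have heq4 := aux_circuit_eq_of_subset M h hempty hmono hsub hsingle h2 h4 hss
        exact hf4 (heq4 ▸ hf2)
      obtain ⟨g, hg4, hg2⟩ := Finset.not_subset.1 hnot4
      have hg3 : g ∈ C3 := (Finset.mem_union.1 (h4union hg4)).resolve_left hg2
      by_cases hcase2 : (C3 ∪ C4).card < (C1 ∪ C2).card
      · exact ih C3 C4 h3 h4 ⟨g, Finset.mem_inter.2 ⟨hg3, hg4⟩⟩ (by omega) x hx3 w hw4
      · have hsub34 : C3 ∪ C4 ⊆ C1 ∪ C2 := Finset.union_subset h3union h4union'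
        have hequ2 : C3 ∪ C4 = C1 ∪ C2 :=
          Finset.eq_of_subset_of_card_le hsub34 (by omega)
        have he4 : e ∈ C4 := by
          have hmem : e ∈ C3 ∪ C4 := hequ2 ▸ Finset.mem_union_left _ he1
          exact (Finset.mem_union.1 hmem).resolve_left he3
        have hsub14 : C1 ∪ C4 ⊆ C1 ∪ C2 :=
          Finset.union_subset Finset.subset_union_left h4union'
        have hfnot : f ∉ C1 ∪ C4 := fun hmem =>
          (Finset.mem_union.1 hmem).elim hf1 hf4
        have hss14 : C1 ∪ C4 ⊂ C1 ∪ C2 :=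
          hsub14.ssubset_of_ne (fun hh => hfnot (hh ▸ Finset.mem_union_right _ hf2))
        have hlt := Finset.card_lt_card hss14
        exact ih C1 C4 h1 h4 ⟨e, Finset.mem_inter.2 ⟨he1, he4⟩⟩ (by omega) x hx w hw4

end Aux4

/-- A matroid is connected iff every pair of distinct elements lies in a common
circuit. -/
theorem matroid_connected_iff_circuits {α : Type*} [DecidableEq α] (M : Finset α)
    (h : Finset α → ℤ)
    (hcard : 2 ≤ M.card)
    (hempty : h ∅ = 0)
    (hnonneg : ∀ A, A ⊆ M → 0 ≤ h A)
    (hmono : ∀ A B : Finset α, A ⊆ B → B ⊆ M → h A ≤ h B)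
    (hsub : ∀ A B : Finset α, A ⊆ M → B ⊆ M → h (A ∪ B) + h (A ∩ B) ≤ h A + h B)
    (hsingle : ∀ i ∈ M, h {i} ≤ 1) :
    (∀ A B : Finset α, A ∪ B = M → Disjoint A B → A.Nonempty → B.Nonempty →
        h A + h B > h M) ↔
    (∀ x ∈ M, ∀ y ∈ M, x ≠ y →
        ∃ C : Finset α, MatCircuit M h C ∧ x ∈ C ∧ y ∈ C) := by
  classical
  constructor
  · intro hconn
    by_contra hnot
    push_neg at hnot
    obtain ⟨x, hxM, y, hyM, hxy, hnoC⟩ := hnot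
    set A := M.filter (fun z => z = x ∨ ∃ C, MatCircuit M h C ∧ x ∈ C ∧ z ∈ C) with hA
    set B := M \ A with hB
    have hAM : A ⊆ M := Finset.filter_subset _ _
    have hBM : B ⊆ M := Finset.sdiff_subset
    have hxA : x ∈ A := Finset.mem_filter.2 ⟨hxM, Or.inl rfl⟩
    have hyB : y ∈ B := Finset.mem_sdiff.2 ⟨hyM, fun hyA => by
      rcases (Finset.mem_filter.1 hyA).2 with rfl | ⟨C, hC, hxC, hyC⟩
      · exact hxy rfl
      · exact hnoC C hC hxC hyC⟩
    have hunion : A ∪ B = M := Finset.union_sdiff_of_subset hAM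
    have hdisj : Disjoint A B := Finset.disjoint_sdiff
    have hclosed : ∀ C, MatCircuit M h C → ∀ a ∈ C, a ∈ A → ∀ b ∈ C, b ∈ A := by
      intro C hC a haC haA b hbC
      have hbM : b ∈ M := hC.1 hbC
      rcases (Finset.mem_filter.1 haA).2 with rfl | ⟨C', hC', hxC', haC'⟩
      · exact Finset.mem_filter.2 ⟨hbM, Or.inr ⟨C, hC, haC, hbC⟩⟩
      · obtain ⟨C'', hC'', hxC'', hbC''⟩ :=
          aux_trans M h hempty hmono hsub hsingle ((C' ∪ C).card) C' C hC' hC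
            ⟨a, Finset.mem_inter.2 ⟨haC', haC⟩⟩ le_rfl x hxC' b hbC
        exact Finset.mem_filter.2 ⟨hbM, Or.inr ⟨C'', hC'', hxC'', hbC''⟩⟩
    obtain ⟨IA, hIAA, hIAind, hIAr⟩ := aux_basis M h hempty hmono hsub hsingle hAM
    obtain ⟨IB, hIBB, hIBind, hIBr⟩ := aux_basis M h hempty hmono hsub hsingle hBM
    have hIM : IA ∪ IB ⊆ M :=
      Finset.union_subset (hIAA.trans hAM) (hIBB.trans hBM)
    have hindep : ¬ MatDep h (IA ∪ IB) := by
      intro hdep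
      obtain ⟨C, hCsub, hC⟩ := aux_dep_circuit M h hempty hmono hsub hsingle hIM hdep
      have hCnotA : ¬ C ⊆ IA := by
        intro hss
        have hci := aux_indep_subset M h hempty hsub hsingle (hIAA.trans hAM) hIAind hss
        have hd := hC.2.1
        rw [MatDep] at hd
        omega
      have hCnotB : ¬ C ⊆ IB := by
        intro hss
        have hci := aux_indep_subset M h hempty hsub hsingle (hIBB.trans hBM) hIBind hss
        have hd := hC.2.1
        rw [MatDep] at hd
        omega
      obtain ⟨b, hbC, hbIA⟩ := Finset.not_subset.1 hCnotA
      have hbIB : b ∈ IB := (Finset.mem_union.1 (hCsub hbC)).resolve_left hbIA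
      obtain ⟨a, haC, haIB⟩ := Finset.not_subset.1 hCnotB
      have haIA : a ∈ IA := (Finset.mem_union.1 (hCsub haC)).resolve_right haIB
      have hbA : b ∈ A := hclosed C hC a haC (hIAA haIA) b hbC
      exact (Finset.mem_sdiff.1 (hIBB hbIB)).2 hbA
    have hucard : h (IA ∪ IB) = ((IA ∪ IB).card : ℤ) := by
      have h1 := aux_card M h hempty hsub hsingle hIM
      rw [MatDep, not_lt] at hindep
      omega
    have hdisjI : Disjoint IA IB := hdisj.mono hIAA hIBB
    have hcardu : ((IA ∪ IB).card : ℤ) = (IA.card : ℤ) + IB.card := by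
      rw [Finset.card_union_of_disjoint hdisjI]
      push_cast
      ring
    have hmle : h (IA ∪ IB) ≤ h M := hmono _ _ hIM (Finset.Subset.refl M)
    have hgt := hconn A B hunion hdisj ⟨x, hxA⟩ ⟨y, hyB⟩
    have eA : h A = (IA.card : ℤ) := by rw [← hIAr, hIAind]
    have eB : h B = (IB.card : ℤ) := by rw [← hIBr, hIBind]
    omega
  · intro hpair A B hun hdisj hAne hBne
    have hAM : A ⊆ M := hun ▸ Finset.subset_union_left
    have hBM : B ⊆ M := hun ▸ Finset.subset_union_right
    by_contra hle
    push_neg at hle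
    have hgeq := hsub A B hAM hBM
    have hAB : A ∩ B = ∅ := Finset.disjoint_iff_inter_eq_empty.1 hdisj
    rw [hun, hAB, hempty] at hgeq
    have heq : h A + h B = h M := by omega
    obtain ⟨x, hx⟩ := hAne
    obtain ⟨y, hy⟩ := hBne
    have hxy : x ≠ y := fun hh => (Finset.disjoint_left.1 hdisj hx) (hh ▸ hy)
    obtain ⟨C, hC, hxC, hyC⟩ := hpair x (hAM hx) y (hBM hy) hxy
    have hCM : C ⊆ M := hC.1
    have s1 := hsub C B hCM hBM
    have s2 := hsub (C ∪ B) A (Finset.union_subset hCM hBM) hAM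
    have hu2 : C ∪ B ∪ A = M := by
      apply Finset.Subset.antisymm
      · exact Finset.union_subset (Finset.union_subset hCM hBM) hAM
      · intro a ha
        rw [← hun] at ha
        rcases Finset.mem_union.1 ha with h' | h'
        · exact Finset.mem_union_right _ h'
        · exact Finset.mem_union_left _ (Finset.mem_union_right _ h')
    have hi2 : (C ∪ B) ∩ A = C ∩ A := by
      ext a
      simp only [Finset.mem_inter, Finset.mem_union]
      constructor
      · rintro ⟨hcb | hb, haA⟩
        · exact ⟨hcb, haA⟩
        · exact absurd haA (fun haA => (Finset.disjoint_right.1 hdisj hb) haA)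
      · rintro ⟨hc, haA⟩
        exact ⟨Or.inl hc, haA⟩
    rw [hu2, hi2] at s2
    have hCA : C ∩ A ⊂ C := by
      refine ⟨Finset.inter_subset_left, fun hss => ?_⟩
      have : y ∈ C ∩ A := hss hyC
      exact (Finset.disjoint_right.1 hdisj hy) (Finset.mem_inter.1 this).2
    have hCB : C ∩ B ⊂ C := by
      refine ⟨Finset.inter_subset_left, fun hss => ?_⟩
      have : x ∈ C ∩ B := hss hxC
      exact (Finset.disjoint_left.1 hdisj hx) (Finset.mem_inter.1 this).2
    have i1 : h (C ∩ A) = ((C ∩ A).card : ℤ) :=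
      aux_circuit_ssubset_indep M h hempty hmono hsub hsingle hC hCA
    have i2 : h (C ∩ B) = ((C ∩ B).card : ℤ) :=
      aux_circuit_ssubset_indep M h hempty hmono hsub hsingle hC hCB
    have hsplit : C = (C ∩ A) ∪ (C ∩ B) := by
      rw [← Finset.inter_union_distrib_left, hun]
      exact (Finset.inter_eq_left.2 hCM).symm
    have hdisjCAB : Disjoint (C ∩ A) (C ∩ B) :=
      hdisj.mono Finset.inter_subset_right Finset.inter_subset_right
    have hcards : (C ∩ A).card + (C ∩ B).card = C.card := by
      conv_rhs => rw [hsplit]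
      rw [Finset.card_union_of_disjoint hdisjCAB]
    have hdep := hC.2.1
    rw [MatDep] at hdep
    omega
end
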